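/- Let m, n ∈ ℤ³ \ {0} and a, b ∈ ℝ³ with ⟨a, m⟩ = 0 and ⟨b, n⟩ = 0, and let u(x) := a·sin⟨m,x⟩ + b·sin⟨n,x⟩. Then 2·B(u) is the field x ↦ sin⟨m−n, x⟩ · P_{m−n}(⟨a,n⟩b − ⟨b,m⟩a) + sin⟨m+n, x⟩ · P_{m+n}(⟨a,n⟩b + ⟨b,m⟩a). -/

import Mathlib

open MeasureTheory Set

noncomputable section

/-- Vector fields on `ℝ³`, with `ℝ³ = Fin 3 → ℝ`. -/
abbrev V3 := Fin 3 → ℝ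

/-- The Euclidean inner product on `ℝ³`. -/
def dot3 (a b : V3) : ℝ := ∑ i, a i * b i

/-- Embedding of `ℤ³` into `ℝ³`. -/
def toR (m : Fin 3 → ℤ) : V3 := fun i => (m i : ℝ)

/-- `2π`-periodic vector field. -/
def PerField (v : V3 → V3) : Prop :=
  ∀ (x : V3) (k : Fin 3 → ℤ), v (x + (2 * Real.pi) • toR k) = v x

/-- `2π`-periodic scalar function. -/
def PerFun (p : V3 → ℝ) : Prop :=
  ∀ (x : V3) (k : Fin 3 → ℤ), p (x + (2 * Real.pi) • toR k) = p x

/-- The fundamental cell `[0,2π]³`. -/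
def Box3 : Set V3 := Set.univ.pi fun _ => Icc (0 : ℝ) (2 * Real.pi)

/-- Divergence-free vector field. -/
def DivFree3 (v : V3 → V3) : Prop :=
  ∀ x, (∑ i, fderiv ℝ v x (Pi.single i 1) i) = 0

/-- Zero mean over the fundamental cell. -/
def ZeroMean3 (v : V3 → V3) : Prop := (∫ x in Box3, v x) = 0

/-- Smooth periodic divergence-free zero-mean vector field. -/
def GoodField (v : V3 → V3) : Prop :=
  ContDiff ℝ (⊤ : ℕ∞) v ∧ PerField v ∧ DivFree3 v ∧ ZeroMean3 v

-- auxiliary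
lemma box3_meas : MeasurableSet Box3 := MeasurableSet.univ_pi fun _ => measurableSet_Icc

lemma integral_Icc_cexp (c : ℤ) (hc : c ≠ 0) :
    (∫ t in Icc (0:ℝ) (2*Real.pi), Complex.exp (Complex.I * c * t)) = 0 := by
  rw [MeasureTheory.integral_Icc_eq_integral_Ioc,
    ← intervalIntegral.integral_of_le (by positivity)]
  rw [integral_exp_mul_complex (by simp [Complex.ext_iff, hc])]
  have h1 : Complex.I * (c:ℂ) * ((2*Real.pi : ℝ) : ℂ) = (c:ℂ) * (2 * (Real.pi:ℂ) * Complex.I) := by push_cast; ring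
  rw [h1, Complex.exp_int_mul_two_pi_mul_I]
  simp

lemma integral_box_sin (ℓ : Fin 3 → ℤ) :
    (∫ x in Box3, Real.sin (dot3 (toR ℓ) x)) = 0 := by
  by_cases hℓ : ℓ = 0
  · subst hℓ
    have : ∀ x : V3, Real.sin (dot3 (toR 0) x) = 0 := by
      intro x; simp [dot3, toR]
    simp_rw [this, integral_zero]
  have hF : Continuous fun x : V3 => Complex.exp (Complex.I * (dot3 (toR ℓ) x)) := by
    apply Complex.continuous_exp.comp
    apply Continuous.mul continuous_const
    apply Complex.continuous_ofReal.comp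
    unfold dot3; continuity
  have hint : IntegrableOn (fun x : V3 => Complex.exp (Complex.I * (dot3 (toR ℓ) x))) Box3 := by
    apply hF.continuousOn.integrableOn_compact
    exact isCompact_univ_pi fun _ => isCompact_Icc
  have him : ∀ x : V3, Real.sin (dot3 (toR ℓ) x)
      = (Complex.exp (Complex.I * (dot3 (toR ℓ) x))).im := by
    intro x
    rw [show Complex.I * (dot3 (toR ℓ) x) = (dot3 (toR ℓ) x : ℝ) * Complex.I by ring]
    exact (Complex.exp_ofReal_mul_I_im _).symm
  calc (∫ x in Box3, Real.sin (dot3 (toR ℓ) x))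
      = (∫ x in Box3, Complex.exp (Complex.I * (dot3 (toR ℓ) x))).im := by
        have h2 := integral_im (𝕜 := ℂ) hint
        simp only [RCLike.im_to_complex] at h2
        rw [← h2]; simp_rw [him]
    _ = 0 := by
        have key : (∫ x in Box3, Complex.exp (Complex.I * (dot3 (toR ℓ) x))) = 0 := by
          have hprod : ∀ x : V3, Box3.indicator
              (fun x : V3 => Complex.exp (Complex.I * (dot3 (toR ℓ) x))) x
              = ∏ i, (Icc (0:ℝ) (2*Real.pi)).indicator
                  (fun t => Complex.exp (Complex.I * (ℓ i) * t)) (x i) := by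
            intro x
            by_cases hx : x ∈ Box3
            · rw [indicator_of_mem hx]
              have : ∀ i, (x i) ∈ Icc (0:ℝ) (2*Real.pi) := fun i => hx i (mem_univ i)
              simp only [indicator_of_mem (this _)]
              rw [← Complex.exp_sum]
              congr 1
              unfold dot3 toR; push_cast
              rw [Finset.mul_sum]
              exact Finset.sum_congr rfl fun i _ => by ring
            · rw [indicator_of_notMem hx]
              rw [Box3, Set.mem_univ_pi] at hx
              push_neg at hx
              obtain ⟨i, hi⟩ := hx
              rw [Finset.prod_eq_zero (Finset.mem_univ i)]
              rw [indicator_of_notMem hi]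
          rw [← MeasureTheory.integral_indicator box3_meas]
          simp_rw [hprod]
          rw [MeasureTheory.integral_fintype_prod_volume_eq_prod
            (f := fun i t => (Icc (0:ℝ) (2*Real.pi)).indicator
              (fun t => Complex.exp (Complex.I * (ℓ i) * t)) t)]
          obtain ⟨j, hj⟩ : ∃ j, ℓ j ≠ 0 := by
            by_contra h; push_neg at h; exact hℓ (funext fun i => h i)
          apply Finset.prod_eq_zero (Finset.mem_univ j)
          rw [MeasureTheory.integral_indicator measurableSet_Icc]
          exact integral_Icc_cexp (ℓ j) hj
        rw [key]; rfl

def Lf (ℓ : V3) : V3 →L[ℝ] ℝ := ∑ i, ℓ i • (ContinuousLinearMap.proj i : V3 →L[ℝ] ℝ)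

lemma Lf_apply (ℓ x : V3) : Lf ℓ x = dot3 ℓ x := by
  simp [Lf, dot3, ContinuousLinearMap.sum_apply]

lemma dot3_comm (a b : V3) : dot3 a b = dot3 b a := by
  unfold dot3; exact Finset.sum_congr rfl fun i _ => mul_comm _ _

lemma dot3_single (ℓ : V3) (i : Fin 3) : dot3 ℓ (Pi.single i 1) = ℓ i := by
  unfold dot3
  rw [Finset.sum_eq_single i] <;> simp +contextual [Pi.single_apply]

lemma hasFDerivAt_sin_smul (ℓ c : V3) (x : V3) :
    HasFDerivAt (fun x => Real.sin (dot3 ℓ x) • c)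
      ((Real.cos (dot3 ℓ x) • Lf ℓ).smulRight c) x := by
  have h0 : HasFDerivAt (fun x => dot3 ℓ x) (Lf ℓ) x := by
    have := (Lf ℓ).hasFDerivAt (x := x)
    simpa [funext fun y => (Lf_apply ℓ y)] using this
  exact (h0.sin).smul_const c

lemma hasFDerivAt_cos_mul (ℓ : V3) (q : ℝ) (x : V3) :
    HasFDerivAt (fun x => Real.cos (dot3 ℓ x) * q)
      (q • ((-Real.sin (dot3 ℓ x)) • Lf ℓ)) x := by
  have h0 : HasFDerivAt (fun x => dot3 ℓ x) (Lf ℓ) x := by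
    have := (Lf ℓ).hasFDerivAt (x := x)
    simpa [funext fun y => (Lf_apply ℓ y)] using this
  exact (h0.cos).mul_const q

lemma contDiff_sin_smul (ℓ c : V3) :
    ContDiff ℝ (⊤ : ℕ∞) (fun x : V3 => Real.sin (dot3 ℓ x) • c) := by
  have h0 : ContDiff ℝ (⊤ : ℕ∞) (fun x : V3 => dot3 ℓ x) := by
    simpa [funext fun y => (Lf_apply ℓ y)] using (Lf ℓ).contDiff (n := (⊤:ℕ∞))
  exact (Real.contDiff_sin.comp h0).smul contDiff_const

lemma contDiff_cos_mul (ℓ : V3) (q : ℝ) :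
    ContDiff ℝ (⊤ : ℕ∞) (fun x : V3 => Real.cos (dot3 ℓ x) * q) := by
  have h0 : ContDiff ℝ (⊤ : ℕ∞) (fun x : V3 => dot3 ℓ x) := by
    simpa [funext fun y => (Lf_apply ℓ y)] using (Lf ℓ).contDiff (n := (⊤:ℕ∞))
  exact (Real.contDiff_cos.comp h0).mul contDiff_const

lemma dot3_add_right (ℓ x y : V3) : dot3 ℓ (x + y) = dot3 ℓ x + dot3 ℓ y := by
  unfold dot3; rw [← Finset.sum_add_distrib]
  exact Finset.sum_congr rfl fun i _ => by simp [mul_add]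

lemma sin_per (m k : Fin 3 → ℤ) (x : V3) :
    Real.sin (dot3 (toR m) (x + (2*Real.pi) • toR k)) = Real.sin (dot3 (toR m) x) := by
  rw [dot3_add_right]
  have : dot3 (toR m) ((2*Real.pi) • toR k) = ((∑ i, m i * k i : ℤ) : ℝ) * (2*Real.pi) := by
    unfold dot3 toR
    push_cast
    rw [Finset.sum_mul]
    exact Finset.sum_congr rfl fun i _ => by simp; ring
  rw [this, Real.sin_add_int_mul_two_pi]

lemma cos_per (m k : Fin 3 → ℤ) (x : V3) :
    Real.cos (dot3 (toR m) (x + (2*Real.pi) • toR k)) = Real.cos (dot3 (toR m) x) := by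
  rw [dot3_add_right]
  have : dot3 (toR m) ((2*Real.pi) • toR k) = ((∑ i, m i * k i : ℤ) : ℝ) * (2*Real.pi) := by
    unfold dot3 toR
    push_cast
    rw [Finset.sum_mul]
    exact Finset.sum_congr rfl fun i _ => by simp; ring
  rw [this, Real.cos_add_int_mul_two_pi]

lemma dot3_zero_left (x : V3) : dot3 0 x = 0 := by simp [dot3]

lemma dot3_smul_right (ℓ : V3) (r : ℝ) (v : V3) : dot3 ℓ (r • v) = r * dot3 ℓ v := by
  simp [dot3, Finset.mul_sum]; exact Finset.sum_congr rfl fun i _ => by ring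

lemma dot3_smul_right' (ℓ : V3) (r : ℝ) (v : V3) : dot3 ℓ (fun j => r * v j) = r * dot3 ℓ v := by
  simp [dot3, Finset.mul_sum]; exact Finset.sum_congr rfl fun i _ => by ring

lemma dot3_sub_right (ℓ u v : V3) : dot3 ℓ (u - v) = dot3 ℓ u - dot3 ℓ v := by
  simp [dot3, mul_sub, Finset.sum_sub_distrib]

lemma dot3_sub_left (u v x : V3) : dot3 (u - v) x = dot3 u x - dot3 v x := by
  simp [dot3, sub_mul, Finset.sum_sub_distrib]

lemma dot3_add_left (u v x : V3) : dot3 (u + v) x = dot3 u x + dot3 v x := by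
  simp [dot3, add_mul, Finset.sum_add_distrib]

lemma toR_sub (m n : Fin 3 → ℤ) : toR (m - n) = toR m - toR n := by
  funext i; simp [toR]

lemma toR_add (m n : Fin 3 → ℤ) : toR (m + n) = toR m + toR n := by
  funext i; simp [toR]

lemma dot3_self_ne_zero {ℓ : V3} (h : ℓ ≠ 0) : dot3 ℓ ℓ ≠ 0 := by
  obtain ⟨j, hj⟩ : ∃ j, ℓ j ≠ 0 := by
    by_contra hc; push_neg at hc; exact h (funext fun i => hc i)
  have : 0 < dot3 ℓ ℓ := by
    apply Finset.sum_pos' (fun i _ => mul_self_nonneg _)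
    exact ⟨j, Finset.mem_univ j, mul_self_pos.mpr hj⟩
  linarith

def Qc (ℓ c : V3) : ℝ := if ℓ = 0 then 0 else -(dot3 c ℓ / dot3 ℓ ℓ) / 2

/-- The gradient of a scalar function. -/
def grad3 (p : V3 → ℝ) (x : V3) : V3 := fun i => fderiv ℝ p x (Pi.single i 1)

/-- The convective term `⟨u,∇⟩u`, i.e. `x ↦ (Du)(x) (u x)`. -/
def convTerm (u : V3 → V3) (x : V3) : V3 := fderiv ℝ u x (u x)

/-- `w` is the Leray projection `B(u)` of the convective term `⟨u,∇⟩u`: it is a smooth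
periodic divergence-free zero-mean field with `⟨u,∇⟩u − w = ∇p` for some smooth
periodic `p`. -/
def IsLeray (u w : V3 → V3) : Prop :=
  GoodField w ∧ ∃ p : V3 → ℝ, ContDiff ℝ (⊤ : ℕ∞) p ∧ PerFun p ∧
    ∀ x, convTerm u x - w x = grad3 p x

/-- The map `B` (defined by choice; for smooth periodic divergence-free zero-mean `u`
the Leray projection exists and is unique, and `Bop u` is it). -/
def Bop (u : V3 → V3) : V3 → V3 :=
  haveI := Classical.propDecidable (∃ w, IsLeray u w)
  if h : ∃ w, IsLeray u w then h.choose else 0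

/-- Orthogonal projection of `ℝ³` onto `ℓ^⊥` (and `0` for `ℓ = 0`). -/
def proj3 (ℓ : V3) (v : V3) : V3 :=
  if ℓ = 0 then 0 else v - (dot3 v ℓ / dot3 ℓ ℓ) • ℓ

lemma dot3_proj3 (ℓ c : V3) : dot3 ℓ (proj3 ℓ c) = 0 := by
  by_cases h : ℓ = 0
  · simp [proj3, h, dot3]
  · rw [proj3, if_neg h, dot3_sub_right, dot3_smul_right]
    rw [dot3_comm c ℓ]
    field_simp [dot3_self_ne_zero h]
    ring

lemma term_eq (ℓ c x : V3) :
    (2⁻¹ * Real.sin (dot3 ℓ x)) • c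
      - Real.sin (dot3 ℓ x) • ((2⁻¹:ℝ) • proj3 ℓ c)
    = (Qc ℓ c) • ((-Real.sin (dot3 ℓ x)) • ℓ) := by
  by_cases h : ℓ = 0
  · subst h; rw [dot3_zero_left]; simp
  · have hne := dot3_self_ne_zero h
    rw [proj3, if_neg h, Qc, if_neg h]
    funext i
    simp only [Pi.sub_apply, Pi.smul_apply, Pi.neg_apply, smul_eq_mul]
    field_simp
    ring


/-- The space `E(K)` of trigonometric divergence-free fields with frequencies in `K`:
finite sums `x ↦ Σ_{ℓ} (a_ℓ cos⟨ℓ,x⟩ + b_ℓ sin⟨ℓ,x⟩)` with `ℓ ∈ K`, `a_ℓ, b_ℓ ⊥ ℓ`. -/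
def EK (K : Set (Fin 3 → ℤ)) : Set (V3 → V3) :=
  {v | ∃ (S : Finset (Fin 3 → ℤ)) (a b : (Fin 3 → ℤ) → V3),
    ↑S ⊆ K ∧
    (∀ ℓ ∈ S, dot3 (a ℓ) (toR ℓ) = 0 ∧ dot3 (b ℓ) (toR ℓ) = 0) ∧
    v = fun x => ∑ ℓ ∈ S,
      (Real.cos (dot3 (toR ℓ) x) • a ℓ + Real.sin (dot3 (toR ℓ) x) • b ℓ)}

/-- The set of fields of the form `η − Σᵢ B(ζⁱ)` with `η, ζⁱ ∈ E`. -/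
def Sform (E : Set (V3 → V3)) : Set (V3 → V3) :=
  {η₁ | ∃ (p : ℕ) (η : V3 → V3) (ζ : Fin p → V3 → V3),
    η ∈ E ∧ (∀ i, ζ i ∈ E) ∧ η₁ = η - ∑ i, Bop (ζ i)}

/-- `F(E)`: the largest vector space all of whose elements can be written
`η − Σᵢ B(ζⁱ)` with `η, ζⁱ ∈ E`. -/
def Fop (E : Set (V3 → V3)) : Set (V3 → V3) :=
  {x | ∃ F : Submodule ℝ (V3 → V3), (F : Set (V3 → V3)) ⊆ Sform E ∧ x ∈ F}

/-- The spaces `E₀(K) = E(K)`, `E_j(K) = F(E_{j−1}(K))`. -/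
def Ej (K : Set (Fin 3 → ℤ)) : ℕ → Set (V3 → V3)
  | 0 => EK K
  | j + 1 => Fop (Ej K j)

/-- `E_∞(K) = ⋃_{j≥1} E_j(K)`. -/
def Einf (K : Set (Fin 3 → ℤ)) : Set (V3 → V3) := ⋃ j : ℕ, Ej K (j + 1)

/-- Two integer vectors are non-parallel if neither is a real multiple of the other. -/
def NonParallel (m n : Fin 3 → ℤ) : Prop :=
  (¬ ∃ c : ℝ, toR m = c • toR n) ∧ (¬ ∃ c : ℝ, toR n = c • toR m)

/-- For `u(x) = a sin⟨m,x⟩ + b sin⟨n,x⟩` with `a ⊥ m`, `b ⊥ n`,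
the Leray projection `B(u)` exists and satisfies
`2 B(u)(x) = sin⟨m−n,x⟩ P_{m−n}(⟨a,n⟩b − ⟨b,m⟩a) + sin⟨m+n,x⟩ P_{m+n}(⟨a,n⟩b + ⟨b,m⟩a)`. -/
theorem Bop_sin_sin (m n : Fin 3 → ℤ) (hm : m ≠ 0) (hn : n ≠ 0) (a b : V3)
    (ha : dot3 a (toR m) = 0) (hb : dot3 b (toR n) = 0) :
    ∃ w : V3 → V3,
      IsLeray (fun x => Real.sin (dot3 (toR m) x) • a + Real.sin (dot3 (toR n) x) • b) w ∧
      ∀ x, (2 : ℝ) • w x =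
        Real.sin (dot3 (toR (m - n)) x) •
          proj3 (toR (m - n)) (dot3 a (toR n) • b - dot3 b (toR m) • a) +
        Real.sin (dot3 (toR (m + n)) x) •
          proj3 (toR (m + n)) (dot3 a (toR n) • b + dot3 b (toR m) • a) := by
  set cm : V3 := dot3 a (toR n) • b - dot3 b (toR m) • a with hcm
  set cp : V3 := dot3 a (toR n) • b + dot3 b (toR m) • a with hcp
  set lm : V3 := toR (m - n) with hlm
  set lp : V3 := toR (m + n) with hlp
  set u : V3 → V3 := fun x => Real.sin (dot3 (toR m) x) • a + Real.sin (dot3 (toR n) x) • b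
    with hu_def
  set w : V3 → V3 := fun x =>
      Real.sin (dot3 lm x) • ((2⁻¹:ℝ) • proj3 lm cm) + Real.sin (dot3 lp x) • ((2⁻¹:ℝ) • proj3 lp cp)
    with hw_def
  have hsum3 : ∀ (l d : V3) (r : ℝ), (∑ i, r * l i * d i) = r * dot3 l d := by
    intro l d r
    rw [dot3, Finset.mul_sum]
    exact Finset.sum_congr rfl fun i _ => by ring
  have hwD : ∀ x, HasFDerivAt w
      ((Real.cos (dot3 lm x) • Lf lm).smulRight ((2⁻¹:ℝ) • proj3 lm cm)
        + (Real.cos (dot3 lp x) • Lf lp).smulRight ((2⁻¹:ℝ) • proj3 lp cp)) x :=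
    fun x => (hasFDerivAt_sin_smul lm _ x).add (hasFDerivAt_sin_smul lp _ x)
  have huD : ∀ x, HasFDerivAt u
      ((Real.cos (dot3 (toR m) x) • Lf (toR m)).smulRight a
        + (Real.cos (dot3 (toR n) x) • Lf (toR n)).smulRight b) x :=
    fun x => (hasFDerivAt_sin_smul _ _ x).add (hasFDerivAt_sin_smul _ _ x)
  refine ⟨w, ⟨⟨?_, ?_, ?_, ?_⟩, ?_⟩, ?_⟩
  · exact (contDiff_sin_smul lm _).add (contDiff_sin_smul lp _)
  · intro x k
    rw [hw_def]
    simp only [hlm, hlp, sin_per]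
  · intro x
    rw [(hwD x).fderiv]
    simp only [ContinuousLinearMap.add_apply, ContinuousLinearMap.smulRight_apply,
      ContinuousLinearMap.coe_smul', Pi.smul_apply, smul_eq_mul, Lf_apply, dot3_single,
      Pi.add_apply]
    rw [Finset.sum_add_distrib, hsum3, hsum3, dot3_smul_right', dot3_smul_right',
      dot3_proj3, dot3_proj3]
    ring
  · rw [ZeroMean3]
    have hcomp : IsCompact Box3 := isCompact_univ_pi fun _ => isCompact_Icc
    have h1 : IntegrableOn (fun x => Real.sin (dot3 lm x) • ((2⁻¹:ℝ) • proj3 lm cm)) Box3 :=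
      (contDiff_sin_smul lm _).continuous.continuousOn.integrableOn_compact hcomp
    have h2 : IntegrableOn (fun x => Real.sin (dot3 lp x) • ((2⁻¹:ℝ) • proj3 lp cp)) Box3 :=
      (contDiff_sin_smul lp _).continuous.continuousOn.integrableOn_compact hcomp
    rw [hw_def]
    rw [MeasureTheory.integral_add h1 h2, integral_smul_const,
      integral_smul_const, hlm, hlp, integral_box_sin, integral_box_sin]
    simp
  · refine ⟨fun x => Real.cos (dot3 lm x) * Qc lm cm + Real.cos (dot3 lp x) * Qc lp cp,
      (contDiff_cos_mul lm _).add (contDiff_cos_mul lp _), ?_, ?_⟩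
    · intro x k
      simp only [hlm, hlp, cos_per]
    · intro x
      have hpD : HasFDerivAt
          (fun x => Real.cos (dot3 lm x) * Qc lm cm + Real.cos (dot3 lp x) * Qc lp cp)
          ((Qc lm cm) • ((-Real.sin (dot3 lm x)) • Lf lm)
            + (Qc lp cp) • ((-Real.sin (dot3 lp x)) • Lf lp)) x :=
        (hasFDerivAt_cos_mul lm _ x).add (hasFDerivAt_cos_mul lp _ x)
      have hg : grad3 (fun x => Real.cos (dot3 lm x) * Qc lm cm
            + Real.cos (dot3 lp x) * Qc lp cp) x
          = (Qc lm cm) • ((-Real.sin (dot3 lm x)) • lm)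
            + (Qc lp cp) • ((-Real.sin (dot3 lp x)) • lp) := by
        funext i
        rw [grad3, hpD.fderiv]
        simp only [ContinuousLinearMap.add_apply, ContinuousLinearMap.coe_smul',
          Pi.smul_apply, smul_eq_mul, Lf_apply, dot3_single, Pi.add_apply, Pi.neg_apply,
          neg_mul, mul_neg]
      rw [hg]
      have hA : convTerm u x
          = (2⁻¹ * Real.sin (dot3 lm x)) • cm + (2⁻¹ * Real.sin (dot3 lp x)) • cp := by
        rw [convTerm, (huD x).fderiv]
        funext i
        simp only [ContinuousLinearMap.add_apply, ContinuousLinearMap.smulRight_apply,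
          ContinuousLinearMap.coe_smul', Pi.smul_apply, smul_eq_mul, Lf_apply, hu_def,
          dot3_add_right, dot3_smul_right, Pi.add_apply, hcm, hcp, Pi.sub_apply,
          hlm, hlp]
        rw [dot3_comm (toR m) a, ha, dot3_comm (toR n) b, hb,
          toR_sub, toR_add, dot3_sub_left, dot3_add_left, Real.sin_sub, Real.sin_add,
          dot3_comm (toR m) b, dot3_comm (toR n) a]
        ring
      rw [hA, hw_def]
      have habel : ∀ (A B C D : V3), (A + B) - (C + D) = (A - C) + (B - D) := by
        intro A B C D; abel
      rw [habel, term_eq lm cm x, term_eq lp cp x]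
  · intro x
    rw [hw_def]
    funext i
    simp only [Pi.add_apply, Pi.smul_apply, smul_eq_mul, hlm, hlp]
    ring
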